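/- arXiv:2211.13447 — 2 statements merged into one kernel-verified Lean document; each statement's English description precedes it below -/
import Mathlib

section
/- Let a jointree for a base network G with clusters C be converted by Algorithm 1 into a twin jointree for the twin network G^t with clusters C^t. Then for every node i of the original jointree, C^t_i ⊆ C_i ∪ (C_i)', and hence |C^t_i| ≤ 2|C_i|. -/
namespace Counterfactual

attribute [local instance] Classical.propDecidable

noncomputable section

universe u v

variable {V : Type u}

variable {V : Type u}

/-- The directed graph given by edge relation `E` (`E p c` means `p` is a parent of `c`)
is acyclic, i.e. it is a DAG. -/
def IsAcyclicRel (E : V → V → Prop) : Prop := ∀ x, ¬ Relation.TransGen E x x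

/-- `x` is a root of the DAG `E`: it has no parents.  Non-roots are called internal. -/
def isRoot (E : V → V → Prop) (x : V) : Prop := ∀ p, ¬ E p x

/-- The family of variable `X` in the DAG `E`: `X` together with its parents. -/
def famOf (E : V → V → Prop) (X : V) : Set V := insert X {p | E p X}

/-- The moral graph of the DAG `E`: connect every pair of nodes having a common child,
then drop directions. -/
def moralGraph (E : V → V → Prop) : SimpleGraph V where
  Adj u w := u ≠ w ∧ (E u w ∨ E w u ∨ ∃ c, E u c ∧ E w c)
  symm := by
    constructor
    intro u w h
    obtain ⟨h1, h2⟩ := h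
    refine ⟨Ne.symm h1, ?_⟩
    rcases h2 with h | h | ⟨c, hc1, hc2⟩
    · exact Or.inr (Or.inl h)
    · exact Or.inl h
    · exact Or.inr (Or.inr ⟨c, hc2, hc1⟩)
  loopless := by
    constructor
    intro u h
    exact h.1 rfl

/-- Eliminating vertex `x` from an undirected graph: pairwise connect the neighbors
of `x`, then remove (isolate) `x`. -/
def eliminate (G : SimpleGraph V) (x : V) : SimpleGraph V where
  Adj u w := u ≠ w ∧ u ≠ x ∧ w ≠ x ∧ (G.Adj u w ∨ (G.Adj u x ∧ G.Adj x w))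
  symm := by
    constructor
    intro u w h
    obtain ⟨h1, h2, h3, h4⟩ := h
    refine ⟨Ne.symm h1, h3, h2, ?_⟩
    rcases h4 with h | ⟨ha, hb⟩
    · exact Or.inl h.symm
    · exact Or.inr ⟨hb.symm, ha.symm⟩
  loopless := by
    constructor
    intro u h
    exact h.1 rfl

/-- Eliminate a list of vertices, in order. -/
def elimList (G : SimpleGraph V) : List V → SimpleGraph V
  | [] => G
  | x :: xs => elimList (eliminate G x) xs

/-- The graph obtained from `G` after eliminating the first `i` variables of `π`. -/
def graphAt (G : SimpleGraph V) (π : List V) (i : ℕ) : SimpleGraph V :=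
  elimList G (π.take i)

/-- `x` together with its neighbors in the undirected graph `G`. -/
def closedNbhd (G : SimpleGraph V) (x : V) : Set V := insert x {y | G.Adj x y}

/-- An elimination order: a total ordering of all the variables. -/
def IsElimOrder (π : List V) : Prop := π.Nodup ∧ ∀ x : V, x ∈ π

/-- The cluster of variable `X` in the elimination process on the moral graph of `E`
induced by `π`: `X` together with its neighbors in the graph just before `X` is eliminated. -/
def clusterOf (E : V → V → Prop) (π : List V) (X : V) : Set V :=
  closedNbhd (graphAt (moralGraph E) π (π.idxOf X)) X

/-- The width of an elimination order: the size of its largest cluster minus one. -/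
def orderWidth (E : V → V → Prop) (π : List V) : ℕ :=
  sSup {n : ℕ | ∃ X ∈ π, n = (clusterOf E π X).ncard} - 1

/-- The treewidth of the DAG `E`: the minimum width attained by an elimination order. -/
def treewidthOf (E : V → V → Prop) : ℕ :=
  sInf {w : ℕ | ∃ π : List V, IsElimOrder π ∧ orderWidth E π = w}

/-! ### Twin networks -/

/-- The variables of the twin network of `E`: the base variables (`Sum.inl`) together
with a duplicate (`Sum.inr`) for every internal (non-root) variable. -/
abbrev TwinVar (E : V → V → Prop) : Type u := V ⊕ {x : V // ¬ isRoot E x}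

/-- The duplicate `X'` of a variable `X`; by convention `X' = X` when `X` is a root. -/
def twinDup (E : V → V → Prop) (x : V) : TwinVar E :=
  if h : isRoot E x then Sum.inl x else Sum.inr ⟨x, h⟩

/-- The edges of the twin network `G^t` of the base network `E`. -/
def twinEdge (E : V → V → Prop) (a b : TwinVar E) : Prop :=
  match a, b with
  | Sum.inl p, Sum.inl x => E p x
  | Sum.inl p, Sum.inr x => isRoot E p ∧ E p x.1
  | Sum.inr p, Sum.inr x => E p.1 x.1
  | Sum.inr _, Sum.inl _ => False

/-- The twin elimination order: replace each non-root variable `X` of `π`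
by the two consecutive variables `X, X'`. -/
def twinOrder (E : V → V → Prop) (π : List V) : List (TwinVar E) :=
  π.foldr (fun x acc =>
    (if h : isRoot E x then [Sum.inl x] else [Sum.inl x, Sum.inr ⟨x, h⟩]) ++ acc) []

/-- Eliminate the pair `{X, X'}` (a single variable when `X` is a root) from a graph
on the twin variables. -/
def elimTwinPair (E : V → V → Prop) (G : SimpleGraph (TwinVar E)) (x : V) :
    SimpleGraph (TwinVar E) :=
  if h : isRoot E x then eliminate G (Sum.inl x)
  else eliminate (eliminate G (Sum.inl x)) (Sum.inr ⟨x, h⟩)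

/-- The twin graph sequence: `twinGraphAt E π i` is the graph obtained from the moral graph
of the twin network after eliminating the pairs `{π 0, (π 0)'}, …` for the first `i`
variables of `π`. -/
def twinGraphAt (E : V → V → Prop) (π : List V) (i : ℕ) : SimpleGraph (TwinVar E) :=
  (π.take i).foldl (elimTwinPair E) (moralGraph (twinEdge E))

/-- The cluster of twin variable `Y` in the elimination process on the moral graph of the
twin network induced by the twin elimination order. -/
def twinClusterOf (E : V → V → Prop) (π : List V) (Y : TwinVar E) : Set (TwinVar E) :=
  clusterOf (twinEdge E) (twinOrder E π) Y

/-! ### Jointrees -/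

/-- A leaf of a tree: a node with exactly one neighbor. -/
def IsLeaf {J : Type v} (T : SimpleGraph J) (j : J) : Prop := ∃! k, T.Adj j k

/-- A jointree for the DAG `E`: a tree `T` together with a host function `H` mapping
(the index `X` of) each family of `E` to a nonempty set of hosting nodes; only leaves
may be hosts and each leaf hosts exactly one family. -/
structure Jointree (E : V → V → Prop) (J : Type v) where
  T : SimpleGraph J
  isTree : T.IsTree
  H : V → Set J
  hosts_nonempty : ∀ X : V, (H X).Nonempty
  hosts_leaf : ∀ (X : V) (j : J), j ∈ H X → IsLeaf T j
  leaf_host : ∀ j : J, IsLeaf T j → ∃! X : V, j ∈ H X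

variable {E : V → V → Prop} {J : Type v}

/-- The variables appearing (in a family hosted by a leaf) on the `i`-side of the
tree edge `(i, j)`. -/
def sideVars (jt : Jointree E J) (i j : J) : Set V :=
  {X | ∃ (Y : V) (l : J), l ∈ jt.H Y ∧ X ∈ famOf E Y ∧
    (jt.T.deleteEdges {s(i, j)}).Reachable i l}

/-- The separator of the tree edge `(i, j)`: the variables hosted on both sides. -/
def sepOf (jt : Jointree E J) (i j : J) : Set V :=
  sideVars jt i j ∩ sideVars jt j i

/-- The cluster of a jointree node: for a leaf, the family it hosts; for an internal
node, the union of the separators of its adjacent edges. -/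
def clusterJT (jt : Jointree E J) (i : J) : Set V :=
  if IsLeaf jt.T i then ⋃ X ∈ {Y : V | i ∈ jt.H Y}, famOf E X
  else ⋃ j ∈ {j : J | jt.T.Adj i j}, sepOf jt i j

/-- The width of a jointree: the size of its largest cluster minus one. -/
def widthJT (jt : Jointree E J) : ℕ := (⨆ i : J, (clusterJT jt i).ncard) - 1

/-- `l` is at or below `u` in the tree `T` rooted at `r`: `u` lies on every
(equivalently, on the unique) path from `r` to `l`. -/
def Below {J : Type v} (T : SimpleGraph J) (r u l : J) : Prop :=
  ∀ p : T.Walk r l, p.IsPath → u ∈ p.support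

/-- Node `u` of the jointree is duplicated by Algorithm 1 (with root `r`): every leaf at
or below `u` hosts only families of internal variables. -/
def Duplicated (jt : Jointree E J) (r u : J) : Prop :=
  ∀ l : J, IsLeaf jt.T l → Below jt.T r u l → ∀ X : V, l ∈ jt.H X → ¬ isRoot E X

/-- The nodes of the twin jointree produced by Algorithm 1: the original nodes
(`Sum.inl`) plus a duplicate (`Sum.inr`) of every duplicated node. -/
abbrev TwinJ (jt : Jointree E J) (r : J) := J ⊕ {u : J // Duplicated jt r u}

/-- Adjacency of the twin jointree produced by Algorithm 1: the original tree edges,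
the duplicates of the duplicated edges, and the edges attaching the roots of the
duplicate subtrees to the parents of the corresponding duplicated subtree roots. -/
def twinTAdj (jt : Jointree E J) (r : J) : TwinJ jt r → TwinJ jt r → Prop
  | Sum.inl i, Sum.inl j => jt.T.Adj i j
  | Sum.inl i, Sum.inr v => jt.T.Adj i v.1 ∧ ¬ Duplicated jt r i
  | Sum.inr u, Sum.inl j => jt.T.Adj u.1 j ∧ ¬ Duplicated jt r j
  | Sum.inr u, Sum.inr v => jt.T.Adj u.1 v.1

/-- The tree of the twin jointree produced by Algorithm 1. -/
def twinT (jt : Jointree E J) (r : J) : SimpleGraph (TwinJ jt r) where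
  Adj := twinTAdj jt r
  symm := by
    constructor
    rintro (i | u) (j | v) h <;> simp only [twinTAdj] at h ⊢
    · exact jt.T.adj_symm h
    · exact ⟨jt.T.adj_symm h.1, h.2⟩
    · exact ⟨jt.T.adj_symm h.1, h.2⟩
    · exact jt.T.adj_symm h
  loopless := by
    constructor
    rintro (i | u) h <;> simp only [twinTAdj] at h
    · exact jt.T.irrefl h
    · exact jt.T.irrefl h

/-- The host function of the twin jointree produced by Algorithm 1: a base family is
hosted by the original hosts of the corresponding base family, and a duplicate family is
hosted by the duplicates of the hosts of the corresponding base family. -/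
def twinH (jt : Jointree E J) (r : J) : TwinVar E → Set (TwinJ jt r) :=
  fun a =>
    match a with
    | Sum.inl X => Sum.inl '' jt.H X
    | Sum.inr x => {b | ∃ (l : J) (hl : Duplicated jt r l),
        l ∈ jt.H x.1 ∧ b = Sum.inr ⟨l, hl⟩}

/-- The copy of jointree node `i` on the duplicate side: its duplicate if `i` is
duplicated, and `i` itself otherwise. -/
def dupJ (jt : Jointree E J) (r i : J) : TwinJ jt r :=
  if h : Duplicated jt r i then Sum.inr ⟨i, h⟩ else Sum.inl i

/-! ### Thinning -/

/-- Thinning rule 1 for removing the functional variable `X` from the separator of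
edge `(i,j)`: the edge lies on a path between two leaves hosting the family of `X`,
and every separator on this path contains `X`. -/
def Rule1 (jt : Jointree E J) (S : J → J → Set V) (i j : J) (X : V) : Prop :=
  ∃ (l m : J) (p : jt.T.Walk l m), p.IsPath ∧ l ∈ jt.H X ∧ m ∈ jt.H X ∧
    s(i, j) ∈ p.edges ∧ ∀ a b : J, s(a, b) ∈ p.edges → X ∈ S a b

/-- Thinning rule 2 for removing the variable `X` from the separator of edge `(i,j)`:
no other separator adjacent to `i` contains `X`, or no other separator adjacent to `j`
contains `X`. -/
def Rule2 (jt : Jointree E J) (S : J → J → Set V) (i j : J) (X : V) : Prop :=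
  (∀ k : J, jt.T.Adj i k → k ≠ j → X ∉ S i k) ∨
  (∀ k : J, jt.T.Adj j k → k ≠ i → X ∉ S j k)

/-- One valid thinning step on a separator assignment: remove a functional
(here: internal, as in an SCM) variable `X` from the separator of an edge `(i,j)`,
as licensed by one of the two thinning rules. -/
def ThinStep (jt : Jointree E J) (S S' : J → J → Set V) : Prop :=
  ∃ (i j : J) (X : V), jt.T.Adj i j ∧ ¬ isRoot E X ∧ X ∈ S i j ∧
    (Rule1 jt S i j X ∨ Rule2 jt S i j X) ∧
    S' = fun a b => if (a = i ∧ b = j) ∨ (a = j ∧ b = i) then S a b \ {X} else S a b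

/-- `S` is the separator assignment of a thinned jointree obtained from `jt`:
it is reachable from the separators of `jt` by valid thinning steps, applied
to exhaustion. -/
def IsThinning (jt : Jointree E J) (S : J → J → Set V) : Prop :=
  Relation.ReflTransGen (ThinStep jt) (fun i j => sepOf jt i j) S ∧
    ∀ S', ¬ ThinStep jt S S'

/-- The cluster of a node of a thinned jointree with separator assignment `S`. -/
def thClusterJT (jt : Jointree E J) (S : J → J → Set V) (i : J) : Set V :=
  if IsLeaf jt.T i then ⋃ X ∈ {Y : V | i ∈ jt.H Y}, famOf E X
  else ⋃ j ∈ {j : J | jt.T.Adj i j}, S i j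

/-- The width of a thinned jointree with separator assignment `S`. -/
def thWidthJT (jt : Jointree E J) (S : J → J → Set V) : ℕ :=
  (⨆ i : J, (thClusterJT jt S i).ncard) - 1

/-- The causal treewidth of the DAG `E` whose internal variables are all functional:
the minimum width attained by a thinned jointree for `E`. -/
def causalTreewidth (E : V → V → Prop) : ℕ :=
  sInf {w : ℕ | ∃ (J : Type u) (_ : Finite J) (jt : Jointree E J) (S : J → J → Set V),
    IsThinning jt S ∧ thWidthJT jt S = w}

/-- The thinned separator assignment for the twin jointree produced by Algorithm 1,
obtained from a thinned separator assignment `S` of the base jointree: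
`S^t = S` on duplicated edges, `S^t = S'` on duplicate edges, and
`S^t = S ∪ S'` on invariant edges. -/
def twinSep (jt : Jointree E J) (r : J) (S : J → J → Set V) :
    TwinJ jt r → TwinJ jt r → Set (TwinVar E)
  | Sum.inl i, Sum.inl j =>
      if Duplicated jt r i ∨ Duplicated jt r j then Sum.inl '' S i j
      else Sum.inl '' S i j ∪ twinDup E '' S i j
  | Sum.inl i, Sum.inr v => twinDup E '' S i v.1
  | Sum.inr u, Sum.inl j => twinDup E '' S u.1 j
  | Sum.inr u, Sum.inr v => twinDup E '' S u.1 v.1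

/-! ### N-world networks -/

/-- The variables of the `N`-world network of a base network with variables `V`,
with respect to a set `R` of roots: the variables in `R` (`Sum.inl`) stay unreplicated,
and each variable outside `R` is replaced by `N` duplicates (`Sum.inr`). -/
abbrev NVar (R : Set V) (N : ℕ) : Type u := {x : V // x ∈ R} ⊕ ({x : V // x ∉ R} × Fin N)

/-- The `k`-th duplicate `X^k` of variable `X`; by convention `X^k = X` when `X ∈ R`. -/
def ndup (R : Set V) (N : ℕ) (x : V) (k : Fin N) : NVar R N :=
  if h : x ∈ R then Sum.inl ⟨x, h⟩ else Sum.inr (⟨x, h⟩, k)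

/-- The edges of the `N`-world network `G^N` of the base network `E` with respect to the
set of roots `R`: a parent `P ∈ R` of `X` is a parent of every duplicate `X^k`, while a
parent `P ∉ R` of `X` yields the edges `P^k → X^k`. -/
def nEdge (E : V → V → Prop) (R : Set V) (N : ℕ) (a b : NVar R N) : Prop :=
  match a, b with
  | Sum.inl p, Sum.inr x => E p.1 x.1.1
  | Sum.inr p, Sum.inr x => E p.1.1 x.1.1 ∧ p.2 = x.2
  | _, _ => False

/-- Eliminate all `N` duplicates `x^1, …, x^N` of `x` (a single variable when `x ∈ R`). -/
def elimNBlock (R : Set V) (N : ℕ) (G : SimpleGraph (NVar R N)) (x : V) :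
    SimpleGraph (NVar R N) :=
  if h : x ∈ R then eliminate G (Sum.inl ⟨x, h⟩)
  else (List.ofFn (fun k : Fin N => (Sum.inr (⟨x, h⟩, k) : NVar R N))).foldl eliminate G

/-- The `N`-world elimination order obtained from `π`: replace each variable `x ∉ R`
by its `N` duplicates `x^1, …, x^N`. -/
def nOrder (R : Set V) (N : ℕ) (π : List V) : List (NVar R N) :=
  π.foldr (fun x acc =>
    (if h : x ∈ R then [(Sum.inl ⟨x, h⟩ : NVar R N)]
     else List.ofFn (fun k : Fin N => (Sum.inr (⟨x, h⟩, k) : NVar R N))) ++ acc) []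

/-! ### Generalized N-world networks -/

/-- The variables of a generalized `N`-world network: nodes outside the duplicated set `D`
stay unreplicated, and each node in `D` is replaced by `N` duplicates. -/
abbrev GNVar (D : Set V) (N : ℕ) : Type u := {x : V // x ∉ D} ⊕ ({x : V // x ∈ D} × Fin N)

/-- The edges of a generalized `N`-world network of the base network `E` with respect to
the duplicated set `D` and the optional extra edges `ex` between duplicates (an edge from
`X^i` to `X^j` is added when `i < j` and `ex X i j` holds). -/
def gnEdge (E : V → V → Prop) (D : Set V) (N : ℕ) (ex : V → Fin N → Fin N → Prop)
    (a b : GNVar D N) : Prop :=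
  match a, b with
  | Sum.inl p, Sum.inl x => E p.1 x.1
  | Sum.inl p, Sum.inr x => E p.1 x.1.1
  | Sum.inr p, Sum.inr x =>
      (E p.1.1 x.1.1 ∧ p.2 = x.2) ∨ (p.1.1 = x.1.1 ∧ p.2 < x.2 ∧ ex x.1.1 p.2 x.2)
  | Sum.inr _, Sum.inl _ => False


/-- The `N`-world graph sequence: the graph obtained from the moral graph of the
`N`-world network after eliminating all duplicates of the first `i` variables of `π`. -/
def nGraphAt (E : V → V → Prop) (R : Set V) (N : ℕ) (π : List V) (i : ℕ) :
    SimpleGraph (NVar R N) :=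
  (π.take i).foldl (elimNBlock R N) (moralGraph (nEdge E R N))

/-- The cluster of an `N`-world variable `Y` in the elimination process on the moral
graph of the `N`-world network induced by the `N`-world elimination order. -/
def nClusterOf (E : V → V → Prop) (R : Set V) (N : ℕ) (π : List V) (Y : NVar R N) :
    Set (NVar R N) :=
  clusterOf (nEdge E R N) (nOrder R N π) Y

end



section TwinProofHelpers

open SimpleGraph

variable {α : Type*}

/-- `m` lies on the `j`-side of vertex `i`: reachable from `j` by a walk avoiding `i`. -/
def MySide (G : SimpleGraph α) (i j m : α) : Prop :=
  ∃ w : G.Walk j m, i ∉ w.support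

lemma mySide_ne {G : SimpleGraph α} {i j m : α} (h : MySide G i j m) : m ≠ i := by
  rintro rfl
  obtain ⟨w, hw⟩ := h
  exact hw w.end_mem_support

lemma mySide_refl {G : SimpleGraph α} {i j : α} (h : i ≠ j) : MySide G i j j :=
  ⟨Walk.nil, by simp [h]⟩

lemma mySide_trans {G : SimpleGraph α} {i j m y : α} (h : MySide G i j m) (ha : G.Adj m y)
    (hy : y ≠ i) : MySide G i j y := by
  obtain ⟨w, hw⟩ := h
  refine ⟨w.concat ha, ?_⟩
  rw [Walk.support_concat]
  simp only [List.concat_eq_append, List.mem_append, List.mem_singleton]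
  rintro (h1 | rfl)
  · exact hw h1
  · exact hy rfl

lemma mySide_compose {G : SimpleGraph α} {i j a m : α} (h : MySide G i j a) (w : G.Walk a m)
    (hi : i ∉ w.support) : MySide G i j m := by
  obtain ⟨w0, hw0⟩ := h
  refine ⟨w0.append w, ?_⟩
  rw [Walk.mem_support_append_iff]
  rintro (h1 | h2)
  exacts [hw0 h1, hi h2]

lemma walk_reach_del {G : SimpleGraph α} {a b x : α} (w : G.Walk a b) (hx : x ∉ w.support)
    (y : α) : (G.deleteEdges {s(x, y)}).Reachable a b := by
  refine ⟨w.toDeleteEdges _ ?_⟩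
  intro e he
  simp only [Set.mem_singleton_iff]
  rintro rfl
  exact hx (w.fst_mem_support_of_mem_edges he)

lemma tree_bridge {G : SimpleGraph α} (ha : G.IsAcyclic) {a b : α} (h : G.Adj a b) :
    ¬ (G.deleteEdges {s(a, b)}).Reachable a b := by
  have hb := isAcyclic_iff_forall_adj_isBridge.mp ha h
  rw [isBridge_iff] at hb
  exact hb

lemma mySide_disjoint {G : SimpleGraph α} (ha : G.IsAcyclic) {i j k m : α} (h1 : G.Adj i j)
    (h2 : G.Adj i k) (hjk : j ≠ k) (hm1 : MySide G i j m) (hm2 : MySide G i k m) : False := by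
  obtain ⟨w1, hw1⟩ := hm1
  obtain ⟨w2, hw2⟩ := hm2
  refine tree_bridge ha h1 ⟨(Walk.cons h2 (w2.append w1.reverse)).toDeleteEdges _ ?_⟩
  intro e he
  rw [Walk.edges_cons, List.mem_cons] at he
  simp only [Set.mem_singleton_iff]
  rcases he with rfl | he
  · intro heq
    rcases Sym2.eq_iff.mp heq with ⟨-, h'⟩ | ⟨h', -⟩
    · exact hjk h'.symm
    · exact h1.ne h'
  · rintro rfl
    have := (w2.append w1.reverse).fst_mem_support_of_mem_edges he
    rw [Walk.mem_support_append_iff] at this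
    rcases this with h' | h'
    · exact hw2 h'
    · rw [Walk.support_reverse, List.mem_reverse] at h'
      exact hw1 h'

lemma mySide_reach {G : SimpleGraph α} {i j m : α} (h : MySide G i j m) :
    (G.deleteEdges {s(i, j)}).Reachable j m := by
  obtain ⟨w, hw⟩ := h
  exact walk_reach_del w hw j

lemma mySide_reach' {G : SimpleGraph α} {i j m : α} (h : MySide G i j m) :
    (G.deleteEdges {s(j, i)}).Reachable j m := by
  rw [show s(j, i) = s(i, j) from Sym2.eq_swap]
  exact mySide_reach h

lemma mySide_reach_from {G : SimpleGraph α} {i j k m : α} (h2 : G.Adj i k) (hkj : k ≠ j)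
    (h : MySide G i k m) : (G.deleteEdges {s(i, j)}).Reachable i m := by
  obtain ⟨w, hw⟩ := h
  refine ⟨(Walk.cons h2 w).toDeleteEdges _ ?_⟩
  intro e he
  rw [Walk.edges_cons, List.mem_cons] at he
  simp only [Set.mem_singleton_iff]
  rcases he with rfl | he
  · intro heq
    rcases Sym2.eq_iff.mp heq with ⟨-, h'⟩ | ⟨h', h''⟩
    · exact hkj h'
    · exact hkj (h''.trans h')
  · rintro rfl
    exact hw (w.fst_mem_support_of_mem_edges he)

lemma reach_of_not_mySide_aux {G : SimpleGraph α} {i j m : α} (p : G.Walk i m) (hp : p.IsPath)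
    (hmi : m ≠ i) (h : ¬ MySide G i j m) : (G.deleteEdges {s(i, j)}).Reachable i m := by
  cases p with
  | nil => exact absurd rfl hmi
  | @cons _ b _ hadj q =>
    rw [Walk.cons_isPath_iff] at hp
    by_cases hbj : b = j
    · subst hbj
      exact absurd ⟨q, hp.2⟩ h
    · exact mySide_reach_from hadj hbj ⟨q, hp.2⟩

lemma reach_of_not_mySide {G : SimpleGraph α} (hc : G.Preconnected) {i j m : α} (hmi : m ≠ i)
    (h : ¬ MySide G i j m) : (G.deleteEdges {s(i, j)}).Reachable i m := by
  obtain ⟨w⟩ := hc i m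
  exact reach_of_not_mySide_aux w.bypass w.bypass_isPath hmi h

lemma mem_support_of_path_from {G : SimpleGraph α} (ha : G.IsAcyclic) {i j z : α}
    (hadj : G.Adj i j) (hr : MySide G i j z) (p : G.Walk i z) (hp : p.IsPath) :
    j ∈ p.support := by
  cases p with
  | nil => exact absurd rfl (mySide_ne hr)
  | @cons _ b _ h q =>
    rw [Walk.cons_isPath_iff] at hp
    by_cases hbj : b = j
    · subst hbj
      simp [Walk.support_cons]
    · exact (mySide_disjoint ha hadj h (Ne.symm hbj) hr ⟨q, hp.2⟩).elim

lemma not_below_of_walk {T : SimpleGraph α} {r u m : α} (w : T.Walk r m) (h : u ∉ w.support) :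
    ¬ Below T r u m := fun hb => h (w.support_bypass_subset (hb w.bypass w.bypass_isPath))

lemma exists_walk_of_not_below {T : SimpleGraph α} {r u m : α} (h : ¬ Below T r u m) :
    ∃ w : T.Walk r m, u ∉ w.support := by
  unfold Below at h
  push_neg at h
  obtain ⟨p, _, hu⟩ := h
  exact ⟨p, hu⟩

lemma below_trans {T : SimpleGraph α} {r j k l : α} (h1 : Below T r j k) (h2 : Below T r k l) :
    Below T r j l := by
  intro p hp
  have hk := h2 p hp
  exact p.support_takeUntil_subset hk (h1 (p.takeUntil k hk) (hp.takeUntil hk))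

lemma below_of_mySide {T : SimpleGraph α} (ha : T.IsAcyclic) {r i j m : α} (hadj : T.Adj i j)
    (hr : ¬ MySide T i j r) (hm : MySide T i j m) : Below T r j m := by
  intro p hp
  by_cases hi : i ∈ p.support
  · have := mem_support_of_path_from ha hadj hm (p.dropUntil i hi) (hp.dropUntil hi)
    exact p.support_dropUntil_subset hi this
  · exfalso
    obtain ⟨wm, hwm⟩ := hm
    refine hr ⟨wm.append p.reverse, ?_⟩
    rw [Walk.mem_support_append_iff]
    rintro (h1 | h2)
    · exact hwm h1
    · rw [Walk.support_reverse, List.mem_reverse] at h2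
      exact hi h2

lemma walk_ind {G : SimpleGraph α} {x : α} (Φ : α → Prop)
    (hcl : ∀ ⦃a b : α⦄, Φ a → G.Adj a b → b ≠ x → Φ b) :
    ∀ {a b : α} (w : G.Walk a b), x ∉ w.support → Φ a → Φ b := by
  intro a b w
  induction w with
  | nil => exact fun _ h => h
  | @cons u c d h p ih =>
    intro hw hu
    rw [Walk.support_cons, List.mem_cons, not_or] at hw
    exact ih hw.2 (hcl hu h fun hc => hw.2 (hc ▸ p.start_mem_support))

variable {V : Type*} {J : Type*} {E : V → V → Prop}

lemma dup_mono (jt : Jointree E J) (r : J) {j k : J} (h : Duplicated jt r j)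
    (hb : Below jt.T r j k) : Duplicated jt r k :=
  fun l hl hbl X hX => h l hl (below_trans hb hbl) X hX

lemma dup_of_mySide_r (jt : Jointree E J) (r : J) (ha : jt.T.IsAcyclic) {i j : J}
    (hadj : jt.T.Adj i j) (hDj : Duplicated jt r j) (hr : MySide jt.T i j r) :
    Duplicated jt r i := by
  intro l hl hbl X hX
  refine hDj l hl ?_ X hX
  intro p hp
  have hi : i ∈ p.support := hbl p hp
  have hmem := mem_support_of_path_from ha hadj hr (p.takeUntil i hi).reverse
    (hp.takeUntil hi).reverse
  rw [Walk.support_reverse, List.mem_reverse] at hmem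
  exact p.support_takeUntil_subset hi hmem

/-- Projection from twin jointree nodes to base jointree nodes. -/
def tprojJ {jt : Jointree E J} {r : J} : TwinJ jt r → J := Sum.elim id Subtype.val

/-- Projection from twin variables to base variables. -/
def tprojV : TwinVar E → V := Sum.elim id Subtype.val

lemma twin_adj_proj {jt : Jointree E J} {r : J} {a b : TwinJ jt r}
    (h : (twinT jt r).Adj a b) : jt.T.Adj (tprojJ a) (tprojJ b) := by
  rcases a with a | a <;> rcases b with b | b
  · exact h
  · exact h.1
  · exact h.1
  · exact h

lemma twin_adj_inl_inr {jt : Jointree E J} {r : J} {a : J} {u : {u : J // Duplicated jt r u}}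
    (h : (twinT jt r).Adj (Sum.inl a) (Sum.inr u)) :
    jt.T.Adj a u.1 ∧ ¬ Duplicated jt r a := h

lemma twin_adj_inr_inl {jt : Jointree E J} {r : J} {b : J} {u : {u : J // Duplicated jt r u}}
    (h : (twinT jt r).Adj (Sum.inr u) (Sum.inl b)) :
    jt.T.Adj u.1 b ∧ ¬ Duplicated jt r b := h

lemma no_return {jt : Jointree E J} {r : J} (htA : (twinT jt r).IsAcyclic)
    (hc : jt.T.Preconnected) {i : J} {v : {u : J // Duplicated jt r u}}
    (hadj : (twinT jt r).Adj (Sum.inl i) (Sum.inr v)) {k : J}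
    (w : (twinT jt r).Walk (Sum.inr v) (Sum.inl k))
    (hw : (Sum.inl i : TwinJ jt r) ∉ w.support) : False := by
  obtain ⟨P⟩ := hc i k
  have hlift : ∀ {a b : J} (_ : jt.T.Walk a b),
      ∃ LQ : (twinT jt r).Walk (Sum.inl a) (Sum.inl b),
      ∀ e ∈ LQ.edges, e ≠ s(Sum.inl i, Sum.inr v) := by
    intro a b Q
    induction Q with
    | nil => exact ⟨Walk.nil, by simp⟩
    | @cons u c d h p ih =>
      obtain ⟨LQ, hLQ⟩ := ih
      refine ⟨Walk.cons (show (twinT jt r).Adj (Sum.inl u) (Sum.inl c) from h) LQ, ?_⟩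
      intro e he
      rw [Walk.edges_cons, List.mem_cons] at he
      rcases he with rfl | he
      · simp [Sym2.eq_iff]
      · exact hLQ e he
  obtain ⟨LP, hLP⟩ := hlift P
  refine tree_bridge htA hadj ?_
  have r1 : ((twinT jt r).deleteEdges {s(Sum.inl i, Sum.inr v)}).Reachable
      (Sum.inl i) (Sum.inl k) :=
    ⟨LP.toDeleteEdges _ (fun e he => by simpa using hLP e he)⟩
  have r2 : ((twinT jt r).deleteEdges {s(Sum.inl i, Sum.inr v)}).Reachable
      (Sum.inl k) (Sum.inr v) := by
    refine ⟨w.reverse.toDeleteEdges _ ?_⟩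
    intro e he
    simp only [Set.mem_singleton_iff]
    rintro rfl
    have := w.reverse.fst_mem_support_of_mem_edges he
    rw [Walk.support_reverse, List.mem_reverse] at this
    exact hw this
  exact r1.trans r2

lemma inv_side {jt : Jointree E J} {r : J} {i : J} (hndi : ¬ Duplicated jt r i)
    {d l : TwinJ jt r} (hd : (twinT jt r).Adj (Sum.inl i) d)
    (w : (twinT jt r).Walk d l) (hw : (Sum.inl i : TwinJ jt r) ∉ w.support) :
    MySide jt.T i (tprojJ d) (tprojJ l) := by
  refine walk_ind (fun v => MySide jt.T i (tprojJ d) (tprojJ v)) ?_ w hw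
    (mySide_refl (twin_adj_proj hd).ne)
  intro a b hA hadj hbne
  refine mySide_trans hA (twin_adj_proj hadj) ?_
  rcases b with m | u
  · exact fun h => hbne (by rw [show m = i from h])
  · exact fun h => hndi (h ▸ u.2)

lemma inv_witness {jt : Jointree E J} {r : J} {i j : J} (hndi : ¬ Duplicated jt r i)
    (hd : (twinT jt r).Adj (Sum.inl i) (Sum.inl j))
    {l : TwinJ jt r} (w : (twinT jt r).Walk (Sum.inl j) l)
    (hw : (Sum.inl i : TwinJ jt r) ∉ w.support)
    (u : {u : J // Duplicated jt r u}) (hl : l = Sum.inr u) :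
    ∃ k, MySide jt.T i j k ∧ ¬ Duplicated jt r k := by
  refine (walk_ind (G := twinT jt r)
    (fun v => MySide jt.T i j (tprojJ v) ∧
      (∀ u' : {u : J // Duplicated jt r u}, v = Sum.inr u' →
        ∃ k, MySide jt.T i j k ∧ ¬ Duplicated jt r k)) ?_ w hw
    ⟨mySide_refl (twin_adj_proj hd).ne, fun _ h => (Sum.inl_ne_inr h).elim⟩).2 u hl
  intro a b hA hadj hbne
  constructor
  · refine mySide_trans hA.1 (twin_adj_proj hadj) ?_
    rcases b with m | u'
    · exact fun h => hbne (by rw [show m = i from h])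
    · exact fun h => hndi (h ▸ u'.2)
  · rintro u' rfl
    rcases a with m | u''
    · exact ⟨m, hA.1, (twin_adj_inl_inr hadj).2⟩
    · exact hA.2 u'' rfl

lemma inv_dup {jt : Jointree E J} {r : J} {i j : J} (hdi : Duplicated jt r i)
    (hd : (twinT jt r).Adj (Sum.inl i) (Sum.inl j))
    {l : TwinJ jt r} (w : (twinT jt r).Walk (Sum.inl j) l)
    (hw : (Sum.inl i : TwinJ jt r) ∉ w.support) :
    (∀ m, l = Sum.inl m → MySide jt.T i j m) ∧
      (∀ u : {u : J // Duplicated jt r u}, l = Sum.inr u → MySide jt.T i j r) := by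
  refine walk_ind (fun v => (∀ m, v = Sum.inl m → MySide jt.T i j m) ∧
      (∀ u : {u : J // Duplicated jt r u}, v = Sum.inr u → MySide jt.T i j r)) ?_ w hw
    ⟨fun m hm => by rw [show m = j from (Sum.inl.inj hm).symm]
                    exact mySide_refl (twin_adj_proj hd).ne,
      fun _ h => (Sum.inl_ne_inr h).elim⟩
  intro a b hA hadj hbne
  constructor
  · rintro m' rfl
    rcases a with m | u
    · exact mySide_trans (hA.1 m rfl) (twin_adj_proj hadj) (fun h => hbne (by rw [h]))
    · have hnd := (twin_adj_inr_inl hadj).2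
      have hnB : ¬ Below jt.T r i m' := fun hb => hnd (dup_mono jt r hdi hb)
      obtain ⟨wrm, hwrm⟩ := exists_walk_of_not_below hnB
      exact mySide_compose (hA.2 u rfl) wrm hwrm
  · rintro u' rfl
    rcases a with m | u
    · have hnd := (twin_adj_inl_inr hadj).2
      have hnB : ¬ Below jt.T r i m := fun hb => hnd (dup_mono jt r hdi hb)
      obtain ⟨wrm, hwrm⟩ := exists_walk_of_not_below hnB
      obtain ⟨wjm, hwjm⟩ := hA.1 m rfl
      refine ⟨wjm.append wrm.reverse, ?_⟩
      rw [Walk.mem_support_append_iff]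
      rintro (h1 | h2)
      · exact hwjm h1
      · rw [Walk.support_reverse, List.mem_reverse] at h2
        exact hwrm h2
    · exact hA.2 u rfl

lemma dup_nbrs {jt : Jointree E J} {r : J} {i : J} (hdi : Duplicated jt r i)
    {d : TwinJ jt r} (hd : (twinT jt r).Adj (Sum.inl i) d) : ∃ j, d = Sum.inl j := by
  rcases d with j | u
  · exact ⟨j, rfl⟩
  · exact absurd hdi (twin_adj_inl_inr hd).2

lemma twinDup_inl {p Z : V} (h : twinDup E p = Sum.inl Z) :
    isRoot E p ∧ p = Z := by
  by_cases hp : isRoot E p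
  · rw [twinDup, dif_pos hp] at h
    exact ⟨hp, Sum.inl.inj h⟩
  · rw [twinDup, dif_neg hp] at h
    exact absurd h (by simp)

lemma twinDup_of_not_root (x : {x : V // ¬ isRoot E x}) :
    twinDup E x.1 = Sum.inr x := by
  rw [twinDup, dif_neg x.2]

lemma tprojV_twinDup (p : V) : tprojV (twinDup E p) = p := by
  by_cases h : isRoot E p <;> simp [twinDup, h, tprojV]

lemma mem_self_fam {X : V} : X ∈ famOf E X := Set.mem_insert _ _

lemma fam_twin_inl (X : V) :
    famOf (twinEdge E) (Sum.inl X) = Sum.inl '' famOf E X := by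
  ext a
  simp only [famOf, Set.mem_insert_iff, Set.mem_setOf_eq, Set.mem_image]
  rcases a with q | q
  · constructor
    · rintro (h | h)
      · exact ⟨q, Or.inl (Sum.inl.inj h), rfl⟩
      · exact ⟨q, Or.inr h, rfl⟩
    · rintro ⟨p, hp, hpq⟩
      obtain rfl : p = q := Sum.inl.inj hpq
      rcases hp with rfl | hp
      · exact Or.inl rfl
      · exact Or.inr hp
  · constructor
    · rintro (h | h)
      · exact absurd h (by simp)
      · exact h.elim
    · rintro ⟨p, -, hpq⟩
      exact absurd hpq (by simp)

lemma fam_twin_inr (x : {x : V // ¬ isRoot E x}) :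
    famOf (twinEdge E) (Sum.inr x) = twinDup E '' famOf E x.1 := by
  ext a
  simp only [famOf, Set.mem_insert_iff, Set.mem_setOf_eq, Set.mem_image]
  constructor
  · rcases a with q | q
    · rintro (h | h)
      · exact absurd h (by simp)
      · exact ⟨q, Or.inr h.2, by rw [twinDup, dif_pos h.1]⟩
    · rintro (h | h)
      · obtain rfl : q = x := Sum.inr.inj h
        exact ⟨q.1, Or.inl rfl, twinDup_of_not_root q⟩
      · exact ⟨q.1, Or.inr h, twinDup_of_not_root q⟩
  · rintro ⟨p, hp, rfl⟩
    rcases hp with rfl | hp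
    · rw [twinDup_of_not_root x]
      exact Or.inl rfl
    · by_cases hroot : isRoot E p
      · rw [twinDup, dif_pos hroot]
        exact Or.inr ⟨hroot, hp⟩
      · rw [twinDup, dif_neg hroot]
        exact Or.inr hp

lemma host_proj {jt : Jointree E J} {r : J} {Y : TwinVar E} {l : TwinJ jt r}
    (hY : l ∈ twinH jt r Y) : tprojJ l ∈ jt.H (tprojV Y) := by
  rcases Y with X | x
  · obtain ⟨m, hm, rfl⟩ := hY
    exact hm
  · obtain ⟨m, hdup, hmem, rfl⟩ := hY
    exact hmem

lemma fam_proj {Y W : TwinVar E} (hW : W ∈ famOf (twinEdge E) Y) :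
    tprojV W ∈ famOf E (tprojV Y) := by
  rcases Y with X | x
  · rw [fam_twin_inl] at hW
    obtain ⟨Z, hZ, rfl⟩ := hW
    exact hZ
  · rw [fam_twin_inr] at hW
    obtain ⟨p, hp, rfl⟩ := hW
    rw [tprojV_twinDup]
    exact hp

lemma mem_cluster_host {jt : Jointree E J} {i : J} {y X : V} (hy : i ∈ jt.H y)
    (hX : X ∈ famOf E y) : X ∈ clusterJT jt i := by
  rw [clusterJT, if_pos (jt.hosts_leaf y i hy)]
  exact Set.mem_biUnion hy hX

lemma leaf_reach_self {jt : Jointree E J} {i j l : J} (hL : IsLeaf jt.T i) (hadj : jt.T.Adj i j)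
    (hre : (jt.T.deleteEdges {s(i, j)}).Reachable i l) : l = i := by
  obtain ⟨w⟩ := hre
  cases w with
  | nil => rfl
  | @cons _ b _ h q =>
    rw [SimpleGraph.deleteEdges_adj] at h
    obtain ⟨k0, -, hu⟩ := hL
    have hbj : b = j := (hu b h.1).trans (hu j hadj).symm
    exact absurd (show s(i, b) ∈ ({s(i, j)} : Set _) from by rw [hbj]; rfl) h.2

lemma mem_sideVars {jt : Jointree E J} {i j l : J} {y X : V} (hy : l ∈ jt.H y)
    (hX : X ∈ famOf E y) (hre : (jt.T.deleteEdges {s(i, j)}).Reachable i l) :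
    X ∈ sideVars jt i j := ⟨y, l, hy, hX, hre⟩

lemma mem_cluster_of_sides {jt : Jointree E J} {i j : J} {X : V} (hadj : jt.T.Adj i j)
    (h1 : X ∈ sideVars jt i j) (h2 : X ∈ sideVars jt j i) : X ∈ clusterJT jt i := by
  by_cases hL : IsLeaf jt.T i
  · obtain ⟨Y, l, hl, hXf, hre⟩ := h1
    rw [leaf_reach_self hL hadj hre] at hl
    exact mem_cluster_host hl hXf
  · rw [clusterJT, if_neg hL]
    exact Set.mem_biUnion hadj ⟨h1, h2⟩

lemma endgame_two (jt : Jointree E J) {i j₁ j₂ m₁ m₂ : J} {y₁ y₂ X : V}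
    (h1adj : jt.T.Adj i j₁) (h2adj : jt.T.Adj i j₂) (hne : j₂ ≠ j₁)
    (hs1 : MySide jt.T i j₁ m₁) (hs2 : MySide jt.T i j₂ m₂)
    (hm1 : m₁ ∈ jt.H y₁) (hf1 : X ∈ famOf E y₁) (hm2 : m₂ ∈ jt.H y₂) (hf2 : X ∈ famOf E y₂) :
    X ∈ clusterJT jt i :=
  mem_cluster_of_sides h1adj (mem_sideVars hm2 hf2 (mySide_reach_from h2adj hne hs2))
    (mem_sideVars hm1 hf1 (mySide_reach' hs1))

lemma endgame_root (jt : Jointree E J) (hc : jt.T.Preconnected) {i j m₁ m₃ : J} {y₁ X : V}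
    (hadj : jt.T.Adj i j) (hs1 : MySide jt.T i j m₁)
    (hm1 : m₁ ∈ jt.H y₁) (hf1 : X ∈ famOf E y₁)
    (hX3 : m₃ ∈ jt.H X) (hnot : ¬ MySide jt.T i j m₃) : X ∈ clusterJT jt i := by
  by_cases h3i : m₃ = i
  · exact mem_cluster_host (h3i ▸ hX3) mem_self_fam
  · exact mem_cluster_of_sides hadj
      (mem_sideVars hX3 mem_self_fam (reach_of_not_mySide hc h3i hnot))
      (mem_sideVars hm1 hf1 (mySide_reach' hs1))

end TwinProofHelpers

/-- for each node `i` of the base jointree, the cluster of `i` in the twin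
jointree produced by Algorithm 1 is contained in `C_i ∪ (C_i)'`, hence has at most twice
as many variables. -/
theorem twin_jointree_clusters {V : Type*} [Fintype V]
    (E : V → V → Prop) (hE : IsAcyclicRel E)
    {J : Type*} [Finite J] (jt : Jointree E J) (r : J)
    (hr : ∀ X : V, r ∈ jt.H X → isRoot E X)
    (jt' : Jointree (twinEdge E) (TwinJ jt r))
    (hT : jt'.T = twinT jt r) (hH : jt'.H = twinH jt r) (i : J) :
    clusterJT jt' (Sum.inl i) ⊆
        Sum.inl '' clusterJT jt i ∪ twinDup E '' clusterJT jt i ∧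
    (clusterJT jt' (Sum.inl i)).ncard ≤ 2 * (clusterJT jt i).ncard := by
  classical
  have htw : (twinT jt r).IsTree := hT ▸ jt'.isTree
  have htA : (twinT jt r).IsAcyclic := htw.IsAcyclic
  have hbA : jt.T.IsAcyclic := jt.isTree.IsAcyclic
  have hbC : jt.T.Preconnected := jt.isTree.isConnected.preconnected
  have hsub : clusterJT jt' (Sum.inl i) ⊆
      Sum.inl '' clusterJT jt i ∪ twinDup E '' clusterJT jt i := by
    intro W hW
    suffices hX : tprojV W ∈ clusterJT jt i by
      rcases W with Z | x
      · exact Or.inl ⟨Z, hX, rfl⟩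
      · exact Or.inr ⟨x.1, hX, twinDup_of_not_root x⟩
    rw [clusterJT] at hW
    by_cases hLeaf : IsLeaf jt'.T (Sum.inl i)
    · rw [if_pos hLeaf] at hW
      simp only [Set.mem_iUnion, Set.mem_setOf_eq] at hW
      obtain ⟨Y, hY, hWf⟩ := hW
      rw [hH] at hY
      rcases Y with X | x
      · obtain ⟨i', hi', hii⟩ := hY
        obtain rfl : i' = i := Sum.inl.inj hii
        rw [fam_twin_inl] at hWf
        obtain ⟨Z, hZ, rfl⟩ := hWf
        exact mem_cluster_host hi' hZ
      · obtain ⟨m, hm, hmem, heq⟩ := hY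
        exact (Sum.inl_ne_inr heq).elim
    · rw [if_neg hLeaf] at hW
      simp only [Set.mem_iUnion, Set.mem_setOf_eq] at hW
      obtain ⟨c, hcadj0, hsep⟩ := hW
      rw [sepOf] at hsep
      obtain ⟨hside1, hside2⟩ := hsep
      obtain ⟨Y₁, l₁, hY₁0, hW₁, hre₁⟩ := hside1
      obtain ⟨Y₂, l₂, hY₂0, hW₂, hre₂⟩ := hside2
      have hY₁ := hY₁0
      have hY₂ := hY₂0
      rw [hH] at hY₁ hY₂
      have hcadj : (twinT jt r).Adj (Sum.inl i) c := hT ▸ hcadj0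
      rw [hT] at hre₁ hre₂
      rw [show s(c, Sum.inl i) = s(Sum.inl i, c) from Sym2.eq_swap] at hre₂
      -- second walk
      obtain ⟨w₂0⟩ := hre₂
      have hw₂i : (Sum.inl i : TwinJ jt r) ∉ w₂0.bypass.support := by
        intro hmem
        exact tree_bridge htA hcadj
          (SimpleGraph.Reachable.symm ⟨(w₂0.bypass).takeUntil _ hmem⟩)
      obtain ⟨t₂0, hw₂⟩ : ∃ t : (twinT jt r).Walk c l₂,
          (Sum.inl i : TwinJ jt r) ∉ t.support :=
        ⟨w₂0.bypass.transfer (twinT jt r)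
          (fun e he => SimpleGraph.edgeSet_mono ((twinT jt r).deleteEdges_le _)
            (w₂0.bypass.edges_subset_edgeSet he)),
          by rw [SimpleGraph.Walk.support_transfer]; exact hw₂i⟩
      -- first walk
      obtain ⟨w₁0⟩ := hre₁
      obtain ⟨p₁, hp₁path⟩ :
          ∃ p : ((twinT jt r).deleteEdges {s(Sum.inl i, c)}).Walk (Sum.inl i) l₁, p.IsPath :=
        ⟨w₁0.bypass, w₁0.bypass_isPath⟩
      cases p₁ with
      | nil => exact absurd (jt'.hosts_leaf Y₁ _ hY₁0) hLeaf
      | @cons _ d₁ _ hd₁ q₁ =>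
        rw [SimpleGraph.Walk.cons_isPath_iff] at hp₁path
        have dadj₁ : (twinT jt r).Adj (Sum.inl i) d₁ := (SimpleGraph.deleteEdges_adj.mp hd₁).1
        have hne₁ : d₁ ≠ c := by
          rintro rfl
          exact (SimpleGraph.deleteEdges_adj.mp hd₁).2 rfl
        obtain ⟨t₁0, hw₁⟩ : ∃ t : (twinT jt r).Walk d₁ l₁,
            (Sum.inl i : TwinJ jt r) ∉ t.support :=
          ⟨q₁.transfer (twinT jt r)
            (fun e he => SimpleGraph.edgeSet_mono ((twinT jt r).deleteEdges_le _)
              (q₁.edges_subset_edgeSet he)),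
            by rw [SimpleGraph.Walk.support_transfer]; exact hp₁path.2⟩
        have hbadj₁ : jt.T.Adj i (tprojJ d₁) := twin_adj_proj dadj₁
        have hbadj₂ : jt.T.Adj i (tprojJ c) := twin_adj_proj hcadj
        by_cases hdi : Duplicated jt r i
        · -- duplicated i: all neighbours of `inl i` are `inl`
          obtain ⟨j₁, rfl⟩ := dup_nbrs hdi dadj₁
          obtain ⟨j₂, rfl⟩ := dup_nbrs hdi hcadj
          have hj12 : j₁ ≠ j₂ := fun h => hne₁ (by rw [h])
          have inv₁ := inv_dup hdi dadj₁ t₁0 hw₁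
          have inv₂ := inv_dup hdi hcadj t₂0 hw₂
          rcases Y₁ with X₁ | x₁ <;> rcases Y₂ with X₂ | x₂
          · -- both base families
            obtain ⟨m₁, hm₁, rfl⟩ := hY₁
            obtain ⟨m₂, hm₂, rfl⟩ := hY₂
            rw [fam_twin_inl] at hW₁ hW₂
            obtain ⟨Z, hZ₁, rfl⟩ := hW₁
            have hZ₂ : Z ∈ famOf E X₂ := by
              obtain ⟨Z', hZ', hZeq⟩ := hW₂
              rwa [← Sum.inl.inj hZeq]
            exact endgame_two jt hbadj₁ hbadj₂ (Ne.symm hj12)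
              (inv₁.1 m₁ rfl) (inv₂.1 m₂ rfl) hm₁ hZ₁ hm₂ hZ₂
          · -- base family on side 1, duplicate family on side 2
            obtain ⟨m₁, hm₁, rfl⟩ := hY₁
            obtain ⟨m₂, hdup₂, hm₂, rfl⟩ := hY₂
            rw [fam_twin_inl] at hW₁
            rw [fam_twin_inr] at hW₂
            obtain ⟨Z, hZ₁, rfl⟩ := hW₁
            obtain ⟨p, hpfam, hpeq⟩ := hW₂
            obtain ⟨hroot, rfl⟩ := twinDup_inl hpeq
            have hsr : MySide jt.T i j₂ r := inv₂.2 _ rfl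
            have hs₁ : MySide jt.T i j₁ m₁ := inv₁.1 m₁ rfl
            obtain ⟨m₃, hm₃⟩ := jt.hosts_nonempty p
            have hnot : ¬ MySide jt.T i j₁ m₃ := by
              intro hs
              have hB : Below jt.T r i m₃ := by
                by_contra hnB
                obtain ⟨wrm, hwrm⟩ := exists_walk_of_not_below hnB
                exact mySide_disjoint hbA hbadj₁ hbadj₂ hj12 hs (mySide_compose hsr wrm hwrm)
              exact hdi m₃ (jt.hosts_leaf p m₃ hm₃) hB p hm₃ hroot
            exact endgame_root jt hbC hbadj₁ hs₁ hm₁ hZ₁ hm₃ hnot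
          · -- duplicate family on side 1, base family on side 2
            obtain ⟨m₁, hdup₁, hm₁, rfl⟩ := hY₁
            obtain ⟨m₂, hm₂, rfl⟩ := hY₂
            rw [fam_twin_inr] at hW₁
            rw [fam_twin_inl] at hW₂
            obtain ⟨Z, hZ₂, rfl⟩ := hW₂
            obtain ⟨p, hpfam, hpeq⟩ := hW₁
            obtain ⟨hroot, rfl⟩ := twinDup_inl hpeq
            have hsr : MySide jt.T i j₁ r := inv₁.2 _ rfl
            have hs₂ : MySide jt.T i j₂ m₂ := inv₂.1 m₂ rfl
            obtain ⟨m₃, hm₃⟩ := jt.hosts_nonempty p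
            have hnot : ¬ MySide jt.T i j₂ m₃ := by
              intro hs
              have hB : Below jt.T r i m₃ := by
                by_contra hnB
                obtain ⟨wrm, hwrm⟩ := exists_walk_of_not_below hnB
                exact mySide_disjoint hbA hbadj₂ hbadj₁ (Ne.symm hj12) hs
                  (mySide_compose hsr wrm hwrm)
              exact hdi m₃ (jt.hosts_leaf p m₃ hm₃) hB p hm₃ hroot
            exact endgame_root jt hbC hbadj₂ hs₂ hm₂ hZ₂ hm₃ hnot
          · -- both duplicate families: impossible
            obtain ⟨m₁, hdup₁, hm₁, rfl⟩ := hY₁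
            obtain ⟨m₂, hdup₂, hm₂, rfl⟩ := hY₂
            exact (mySide_disjoint hbA hbadj₁ hbadj₂ hj12 (inv₁.2 _ rfl) (inv₂.2 _ rfl)).elim
        · -- i not duplicated
          have hs₁ := inv_side hdi dadj₁ t₁0 hw₁
          have hs₂ := inv_side hdi hcadj t₂0 hw₂
          by_cases hj : tprojJ d₁ = tprojJ c
          · -- same base branch: one of the two twin edges is the duplicate edge
            rcases d₁ with a | u <;> rcases c with b | u'
            · exact absurd (by rw [show a = b from hj]) hne₁
            · -- d₁ = inl a, c = inr u' with u'.1 = a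
              have hj' : a = u'.1 := hj
              have hDj : Duplicated jt r a := by rw [hj']; exact u'.2
              have hnsr : ¬ MySide jt.T i a r := fun hs =>
                hdi (dup_of_mySide_r jt r hbA hbadj₁ hDj hs)
              rcases Y₂ with X₂ | x₂
              · obtain ⟨m₂, hm₂, rfl⟩ := hY₂
                exact (no_return htA hbC hcadj t₂0 hw₂).elim
              · obtain ⟨m₂, hdup₂, hm₂, rfl⟩ := hY₂
                rw [fam_twin_inr] at hW₂
                obtain ⟨p, hpfam, hpeq⟩ := hW₂
                rcases Y₁ with X₁ | x₁
                · obtain ⟨m₁, hm₁, rfl⟩ := hY₁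
                  rw [fam_twin_inl] at hW₁
                  obtain ⟨Z, hZ₁, rfl⟩ := hW₁
                  obtain ⟨hroot, rfl⟩ := twinDup_inl hpeq
                  obtain ⟨m₃, hm₃⟩ := jt.hosts_nonempty p
                  have hnot : ¬ MySide jt.T i a m₃ := fun hs =>
                    hDj m₃ (jt.hosts_leaf p m₃ hm₃)
                      (below_of_mySide hbA hbadj₁ hnsr hs) p hm₃ hroot
                  exact endgame_root jt hbC hbadj₁ hs₁ hm₁ hZ₁ hm₃ hnot
                · obtain ⟨m₁, hdup₁, hm₁, rfl⟩ := hY₁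
                  obtain ⟨k, hks, hknd⟩ := inv_witness hdi dadj₁ t₁0 hw₁ ⟨m₁, hdup₁⟩ rfl
                  exact absurd (dup_mono jt r hDj (below_of_mySide hbA hbadj₁ hnsr hks)) hknd
            · -- d₁ = inr u, c = inl b with u.1 = b
              have hj' : u.1 = b := hj
              have hDj : Duplicated jt r b := hj' ▸ u.2
              have hnsr : ¬ MySide jt.T i b r := fun hs =>
                hdi (dup_of_mySide_r jt r hbA hbadj₂ hDj hs)
              rcases Y₁ with X₁ | x₁
              · obtain ⟨m₁, hm₁, rfl⟩ := hY₁
                exact (no_return htA hbC dadj₁ t₁0 hw₁).elim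
              · obtain ⟨m₁, hdup₁, hm₁, rfl⟩ := hY₁
                rw [fam_twin_inr] at hW₁
                obtain ⟨p, hpfam, hpeq⟩ := hW₁
                rcases Y₂ with X₂ | x₂
                · obtain ⟨m₂, hm₂, rfl⟩ := hY₂
                  rw [fam_twin_inl] at hW₂
                  obtain ⟨Z, hZ₂, rfl⟩ := hW₂
                  obtain ⟨hroot, rfl⟩ := twinDup_inl hpeq
                  obtain ⟨m₃, hm₃⟩ := jt.hosts_nonempty p
                  have hnot : ¬ MySide jt.T i b m₃ := fun hs =>
                    hDj m₃ (jt.hosts_leaf p m₃ hm₃)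
                      (below_of_mySide hbA hbadj₂ hnsr hs) p hm₃ hroot
                  exact endgame_root jt hbC hbadj₂ hs₂ hm₂ hZ₂ hm₃ hnot
                · obtain ⟨m₂, hdup₂, hm₂, rfl⟩ := hY₂
                  obtain ⟨k, hks, hknd⟩ := inv_witness hdi hcadj t₂0 hw₂ ⟨m₂, hdup₂⟩ rfl
                  exact absurd (dup_mono jt r hDj (below_of_mySide hbA hbadj₂ hnsr hks)) hknd
            · -- both inr: equal, contradiction
              have hj' : u.1 = u'.1 := hj
              exact absurd (congrArg Sum.inr (Subtype.ext hj')) hne₁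
          · -- different base branches
            exact endgame_two jt hbadj₁ hbadj₂ (fun h => hj h.symm) hs₁ hs₂
              (host_proj hY₁) (fam_proj hW₁) (host_proj hY₂) (fam_proj hW₂)
  refine ⟨hsub, ?_⟩
  have hfin : (clusterJT jt i).Finite := Set.toFinite _
  calc (clusterJT jt' (Sum.inl i)).ncard
      ≤ (Sum.inl '' clusterJT jt i ∪ twinDup E '' clusterJT jt i).ncard :=
        Set.ncard_le_ncard hsub ((hfin.image _).union (hfin.image _))
    _ ≤ (Sum.inl '' clusterJT jt i).ncard + (twinDup E '' clusterJT jt i).ncard :=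
        Set.ncard_union_le _ _
    _ ≤ (clusterJT jt i).ncard + (clusterJT jt i).ncard :=
        Nat.add_le_add (Set.ncard_image_le hfin) (Set.ncard_image_le hfin)
    _ = 2 * (clusterJT jt i).ncard := (two_mul _).symm

end Counterfactual
end

section
/- Let π be an elimination order of width w for a base network G, let R be a subset of the roots of G, let N ≥ 1, and eliminate variables from the N-world network G^N in the order obtained from π by replacing each variable π(i) not in R with its N duplicates π(i)^1,...,π(i)^N. Then the width w^N of this elimination order for G^N satisfies w^N ≤ N(w + 1) − 1. -/
namespace Counterfactual

attribute [local instance] Classical.propDecidable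

section NWorldAux

variable {V : Type*}

/-- Projection of an `N`-world variable to its base variable. -/
def pV {R : Set V} {N : ℕ} : NVar R N → V
  | Sum.inl x => x.1
  | Sum.inr x => x.1.1

/-- The block of duplicates of a variable in the `N`-world order. -/
noncomputable def nblock (R : Set V) (N : ℕ) (x : V) : List (NVar R N) :=
  if h : x ∈ R then [(Sum.inl ⟨x, h⟩ : NVar R N)]
  else List.ofFn (fun k : Fin N => (Sum.inr (⟨x, h⟩, k) : NVar R N))

lemma nOrder_nil (R : Set V) (N : ℕ) : nOrder R N ([] : List V) = [] := rfl

lemma nOrder_cons (R : Set V) (N : ℕ) (x : V) (π : List V) :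
    nOrder R N (x :: π) = nblock R N x ++ nOrder R N π := rfl

lemma pV_of_mem_nblock {R : Set V} {N : ℕ} {x : V} {u : NVar R N}
    (h : u ∈ nblock R N x) : pV u = x := by
  unfold nblock at h
  split at h
  · simp only [List.mem_singleton] at h
    subst h; rfl
  · rw [List.mem_ofFn] at h
    obtain ⟨k, rfl⟩ := h
    rfl

lemma mem_nblock_of_pV {R : Set V} {N : ℕ} {x : V} {u : NVar R N}
    (h : pV u = x) : u ∈ nblock R N x := by
  cases u with
  | inl y =>
    obtain ⟨y, hy⟩ := y
    obtain rfl : y = x := h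
    unfold nblock
    rw [dif_pos hy]
    exact List.mem_singleton.mpr rfl
  | inr y =>
    obtain ⟨⟨y, hy⟩, k⟩ := y
    obtain rfl : y = x := h
    unfold nblock
    rw [dif_neg hy, List.mem_ofFn]
    exact ⟨k, rfl⟩

lemma pV_mem_of_mem_nOrder {R : Set V} {N : ℕ} {π : List V} {Y : NVar R N}
    (h : Y ∈ nOrder R N π) : pV Y ∈ π := by
  induction π with
  | nil => simp [nOrder_nil] at h
  | cons x π' ih =>
    rw [nOrder_cons, List.mem_append] at h
    rcases h with h | h
    · exact (pV_of_mem_nblock h) ▸ List.mem_cons_self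
    · exact List.mem_cons_of_mem _ (ih h)

lemma elimList_append (G : SimpleGraph V) (l1 l2 : List V) :
    elimList G (l1 ++ l2) = elimList (elimList G l1) l2 := by
  induction l1 generalizing G with
  | nil => rfl
  | cons a l1 ih =>
    show elimList (eliminate G a) (l1 ++ l2) = elimList (elimList (eliminate G a) l1) l2
    exact ih _

lemma isolated_eliminate {G : SimpleGraph V} {u : V} (a : V)
    (h : ∀ v, ¬ G.Adj u v) : ∀ v, ¬ (eliminate G a).Adj u v := by
  rintro v ⟨_, _, _, h4 | ⟨h4, _⟩⟩
  · exact h v h4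
  · exact h a h4

lemma eliminate_self_isolated (G : SimpleGraph V) (a : V) :
    ∀ v, ¬ (eliminate G a).Adj a v := by
  rintro v ⟨_, h2, _, _⟩
  exact h2 rfl

lemma isolated_elimList {G : SimpleGraph V} {u : V} (l : List V)
    (h : ∀ v, ¬ G.Adj u v) : ∀ v, ¬ (elimList G l).Adj u v := by
  induction l generalizing G with
  | nil => exact h
  | cons a l ih => exact ih (isolated_eliminate a h)

lemma isolated_of_mem {G : SimpleGraph V} {u : V} {l : List V}
    (h : u ∈ l) : ∀ v, ¬ (elimList G l).Adj u v := by
  induction l generalizing G with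
  | nil => simp at h
  | cons a l ih =>
    rcases List.mem_cons.mp h with rfl | h
    · exact isolated_elimList l (eliminate_self_isolated G u)
    · exact ih h

lemma nEdge_proj {E : V → V → Prop} {R : Set V} {N : ℕ} {u v : NVar R N}
    (h : nEdge E R N u v) : E (pV u) (pV v) := by
  rcases u with x | x <;> rcases v with y | y <;> simp only [nEdge] at h
  · exact h
  · exact h.1

lemma moral_inv (E : V → V → Prop) (R : Set V) (N : ℕ) :
    ∀ u v : NVar R N, (moralGraph (nEdge E R N)).Adj u v →
      pV u = pV v ∨ (moralGraph E).Adj (pV u) (pV v) := by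
  rintro u v ⟨hne, h⟩
  by_cases heq : pV u = pV v
  · exact Or.inl heq
  · refine Or.inr ⟨heq, ?_⟩
    rcases h with h | h | ⟨c, h1, h2⟩
    · exact Or.inl (nEdge_proj h)
    · exact Or.inr (Or.inl (nEdge_proj h))
    · exact Or.inr (Or.inr ⟨pV c, nEdge_proj h1, nEdge_proj h2⟩)

lemma invBlock_eliminate {R : Set V} {N : ℕ} {G : SimpleGraph (NVar R N)}
    {H : SimpleGraph V} {x : V} {a : NVar R N} (ha : pV a = x)
    (h : ∀ u v : NVar R N, G.Adj u v → pV u = pV v ∨ H.Adj (pV u) (pV v) ∨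
      (pV u ∈ closedNbhd H x ∧ pV v ∈ closedNbhd H x)) :
    ∀ u v : NVar R N, (eliminate G a).Adj u v → pV u = pV v ∨ H.Adj (pV u) (pV v) ∨
      (pV u ∈ closedNbhd H x ∧ pV v ∈ closedNbhd H x) := by
  have hcl : ∀ u : NVar R N, G.Adj u a → pV u ∈ closedNbhd H x := by
    intro u hu
    rcases h u a hu with he | hadj | ⟨hc, _⟩
    · rw [he, ha]; exact Set.mem_insert _ _
    · rw [ha] at hadj
      exact Set.mem_insert_of_mem _ hadj.symm
    · exact hc
  rintro u v ⟨_, _, _, h4 | ⟨h4, h5⟩⟩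
  · exact h u v h4
  · exact Or.inr (Or.inr ⟨hcl u h4, hcl v h5.symm⟩)

lemma invBlock_elimList {R : Set V} {N : ℕ} {G : SimpleGraph (NVar R N)}
    {H : SimpleGraph V} {x : V} {l : List (NVar R N)} (hl : ∀ a ∈ l, pV a = x)
    (h : ∀ u v : NVar R N, G.Adj u v → pV u = pV v ∨ H.Adj (pV u) (pV v) ∨
      (pV u ∈ closedNbhd H x ∧ pV v ∈ closedNbhd H x)) :
    ∀ u v : NVar R N, (elimList G l).Adj u v → pV u = pV v ∨ H.Adj (pV u) (pV v) ∨
      (pV u ∈ closedNbhd H x ∧ pV v ∈ closedNbhd H x) := by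
  induction l generalizing G with
  | nil => exact h
  | cons a l ih =>
    exact ih (fun b hb => hl b (List.mem_cons_of_mem _ hb))
      (invBlock_eliminate (hl a (List.mem_cons_self)) h)

lemma inv_of_block {R : Set V} {N : ℕ} {G : SimpleGraph (NVar R N)}
    {H : SimpleGraph V} {x : V}
    (hiso : ∀ u : NVar R N, pV u = x → ∀ v, ¬ G.Adj u v)
    (h : ∀ u v : NVar R N, G.Adj u v → pV u = pV v ∨ H.Adj (pV u) (pV v) ∨
      (pV u ∈ closedNbhd H x ∧ pV v ∈ closedNbhd H x)) :
    ∀ u v : NVar R N, G.Adj u v → pV u = pV v ∨ (eliminate H x).Adj (pV u) (pV v) := by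
  intro u v huv
  have hux : pV u ≠ x := fun e => hiso u e v huv
  have hvx : pV v ≠ x := fun e => hiso v e u huv.symm
  by_cases heq : pV u = pV v
  · exact Or.inl heq
  refine Or.inr ?_
  rcases h u v huv with he | hadj | ⟨hc1, hc2⟩
  · exact absurd he heq
  · exact ⟨heq, hux, hvx, Or.inl hadj⟩
  · rcases Set.mem_insert_iff.mp hc1 with he | hadj1
    · exact absurd he hux
    rcases Set.mem_insert_iff.mp hc2 with he | hadj2
    · exact absurd he hvx
    exact ⟨heq, hux, hvx, Or.inr ⟨hadj1.symm, hadj2⟩⟩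

/-- Core lemma: in the blockwise elimination, the neighbors of a duplicate `Y`
just before its elimination project into the base cluster of the base variable of `Y`. -/
lemma nworld_core (E : V → V → Prop) (R : Set V) (N : ℕ) :
    ∀ (π : List V), π.Nodup →
    ∀ (G : SimpleGraph (NVar R N)) (H : SimpleGraph V),
    (∀ u v : NVar R N, G.Adj u v → pV u = pV v ∨ H.Adj (pV u) (pV v)) →
    ∀ (pre post : List (NVar R N)) (Y v : NVar R N),
    nOrder R N π = pre ++ Y :: post →
    (elimList G pre).Adj Y v →
    pV v ∈ closedNbhd (elimList H (π.take (π.idxOf (pV Y)))) (pV Y) := by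
  intro π
  induction π with
  | nil =>
    intro _ G H _ pre post Y v heq
    rw [nOrder_nil] at heq
    exact absurd heq (by simp)
  | cons x π' ih =>
    intro hnd G H hinv pre post Y v heq hadj
    rw [nOrder_cons] at heq
    obtain ⟨hxπ', hnd'⟩ := List.nodup_cons.mp hnd
    -- recursive step: Y lies beyond the block of x
    have step : ∀ a' : List (NVar R N), pre = nblock R N x ++ a' →
        nOrder R N π' = a' ++ Y :: post →
        pV v ∈ closedNbhd (elimList H ((x :: π').take ((x :: π').idxOf (pV Y)))) (pV Y) := by
      intro a' hpre hrest
      have hYmem : Y ∈ nOrder R N π' := by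
        rw [hrest]; exact List.mem_append_right _ (List.mem_cons_self)
      have hpY : pV Y ∈ π' := pV_mem_of_mem_nOrder hYmem
      have hxne : x ≠ pV Y := fun e => hxπ' (e ▸ hpY)
      -- new invariant after the block of x
      set G1 := elimList G (nblock R N x) with hG1
      have hinvB : ∀ u w : NVar R N, G1.Adj u w → pV u = pV w ∨ H.Adj (pV u) (pV w) ∨
          (pV u ∈ closedNbhd H x ∧ pV w ∈ closedNbhd H x) :=
        invBlock_elimList (fun a ha => pV_of_mem_nblock ha)
          (fun u w huw => (hinv u w huw).imp id Or.inl)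
      have hiso : ∀ u : NVar R N, pV u = x → ∀ w, ¬ G1.Adj u w :=
        fun u hu => isolated_of_mem (mem_nblock_of_pV hu)
      have hinv1 := inv_of_block hiso hinvB
      have hadj1 : (elimList G1 a').Adj Y v := by
        rw [hG1, ← elimList_append, ← hpre]; exact hadj
      have := ih hnd' G1 (eliminate H x) hinv1 a' post Y v hrest hadj1
      rw [List.idxOf_cons_ne _ hxne, Nat.succ_eq_add_one, List.take_succ_cons]
      exact this
    rcases List.append_eq_append_iff.mp heq with ⟨a', hpre, hrest⟩ | ⟨c', hblk, hcons⟩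
    · exact step a' hpre hrest
    · cases c' with
      | nil =>
        exact step [] (by simpa using hblk.symm) (by simpa using hcons.symm)
      | cons Z c'' =>
        rw [List.cons_append] at hcons
        obtain ⟨rfl, -⟩ := List.cons_eq_cons.mp hcons
        have hYblk : Y ∈ nblock R N x := by
          rw [hblk]; exact List.mem_append_right _ (List.mem_cons_self)
        have hpY : pV Y = x := pV_of_mem_nblock hYblk
        have hpre : ∀ a ∈ pre, pV a = x := fun a ha =>
          pV_of_mem_nblock (hblk ▸ List.mem_append_left _ ha)
        have hinvB : ∀ u w : NVar R N, (elimList G pre).Adj u w →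
            pV u = pV w ∨ H.Adj (pV u) (pV w) ∨
            (pV u ∈ closedNbhd H x ∧ pV w ∈ closedNbhd H x) :=
          invBlock_elimList hpre (fun u w huw => (hinv u w huw).imp id Or.inl)
        rw [hpY, List.idxOf_cons_self, List.take_zero]
        show pV v ∈ closedNbhd (elimList H []) x
        rcases hinvB Y v hadj with he | hadj2 | ⟨_, hc⟩
        · rw [← he, hpY]; exact Set.mem_insert _ _
        · rw [hpY] at hadj2
          exact Set.mem_insert_of_mem _ hadj2
        · exact hc

/-- Decomposition of a list at the index of one of its members. -/
lemma indexOf_take_drop_decomp {α : Type*} [DecidableEq α] {L : List α} {Y : α}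
    (hY : Y ∈ L) :
    L = L.take (L.idxOf Y) ++ Y :: L.drop (L.idxOf Y + 1) := by
  have hj : L.idxOf Y < L.length := List.idxOf_lt_length_iff.mpr hY
  conv_lhs => rw [← List.take_append_drop (L.idxOf Y) L]
  rw [List.drop_eq_getElem_cons hj, List.getElem_idxOf hj]

/-- The `N`-world cluster of `Y` projects into the base cluster of the base
variable of `Y`. -/
lemma nworld_cluster_subset {V : Type*} {E : V → V → Prop} {R : Set V} {N : ℕ}
    {π : List V} (hnd : π.Nodup) (Y : NVar R N) (hY : Y ∈ nOrder R N π) :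
    clusterOf (nEdge E R N) (nOrder R N π) Y ⊆ pV ⁻¹' (clusterOf E π (pV Y)) := by
  intro v hv
  rcases Set.mem_insert_iff.mp hv with rfl | hadj
  · exact Set.mem_insert _ _
  · refine nworld_core E R N π hnd _ _ (moral_inv E R N) _ ?_ Y v ?_ hadj
    rotate_left
    exact @indexOf_take_drop_decomp _ (fun a b => Classical.propDecidable (a = b)) _ _ hY

/-- Each fiber of the projection has at most `N` elements. -/
lemma ncard_pV_preimage_le {V : Type*} [Finite V] {R : Set V} {N : ℕ} (hN : 1 ≤ N)
    (S : Set V) : (pV ⁻¹' S : Set (NVar R N)).ncard ≤ N * S.ncard := by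
  classical
  set f : NVar R N → V × Fin N := fun u =>
    match u with
    | Sum.inl x => (x.1, ⟨0, hN⟩)
    | Sum.inr x => (x.1.1, x.2) with hfdef
  have hfst : ∀ u, (f u).1 = pV u := by rintro (x | x) <;> rfl
  have hf : Function.Injective f := by
    rintro (x | x) (y | y) h <;> simp only [hfdef, Prod.mk.injEq] at h
    · exact congrArg Sum.inl (Subtype.ext h.1)
    · exact absurd (h.1 ▸ x.2) y.1.2
    · exact absurd (h.1.symm ▸ y.2) x.1.2
    · exact congrArg Sum.inr (Prod.ext (Subtype.ext h.1) h.2)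
  have himg : f '' (pV ⁻¹' S) ⊆ S ×ˢ (Set.univ : Set (Fin N)) := by
    rintro p ⟨u, hu, rfl⟩
    exact ⟨by rw [hfst]; exact hu, trivial⟩
  calc (pV ⁻¹' S : Set (NVar R N)).ncard = (f '' (pV ⁻¹' S)).ncard :=
        (Set.ncard_image_of_injective _ hf).symm
    _ ≤ (S ×ˢ (Set.univ : Set (Fin N))).ncard := Set.ncard_le_ncard himg (Set.toFinite _)
    _ = S.ncard * N := by
        rw [← Nat.card_coe_set_eq, Nat.card_congr (Equiv.Set.prod _ _), Nat.card_prod,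
          Nat.card_coe_set_eq, Nat.card_coe_set_eq, Set.ncard_univ]
        simp
    _ = N * S.ncard := Nat.mul_comm _ _

end NWorldAux


/-- the width of the `N`-world elimination order obtained from an
elimination order `π` of width `w` is at most `N(w + 1) − 1`. -/
theorem nworld_order_width_le {V : Type*} [Fintype V]
    (E : V → V → Prop) (hE : IsAcyclicRel E)
    (R : Set V) (hR : ∀ x ∈ R, isRoot E x) (N : ℕ) (hN : 1 ≤ N)
    (π : List V) (hπ : IsElimOrder π) :
    orderWidth (nEdge E R N) (nOrder R N π) ≤ N * (orderWidth E π + 1) - 1 := by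
  classical
  simp only [orderWidth]
  set SB := {n : ℕ | ∃ X ∈ π, n = (clusterOf E π X).ncard} with hSBdef
  set SN := {n : ℕ | ∃ X ∈ nOrder R N π,
    n = (clusterOf (nEdge E R N) (nOrder R N π) X).ncard} with hSNdef
  have hbddB : BddAbove SB := by
    apply Set.Finite.bddAbove
    apply Set.Finite.subset (Set.finite_range (fun X : V => (clusterOf E π X).ncard))
    rintro n ⟨X, -, rfl⟩
    exact ⟨X, rfl⟩
  have hkey : ∀ n ∈ SN, n ≤ N * sSup SB := by
    rintro n ⟨Y, hY, rfl⟩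
    have h1 : (clusterOf (nEdge E R N) (nOrder R N π) Y).ncard
        ≤ (pV ⁻¹' (clusterOf E π (pV Y)) : Set (NVar R N)).ncard :=
      Set.ncard_le_ncard (nworld_cluster_subset hπ.1 Y hY) (Set.toFinite _)
    have h2 := ncard_pV_preimage_le (R := R) hN (clusterOf E π (pV Y))
    have h3 : (clusterOf E π (pV Y)).ncard ≤ sSup SB :=
      le_csSup hbddB ⟨pV Y, pV_mem_of_mem_nOrder hY, rfl⟩
    exact (h1.trans h2).trans (Nat.mul_le_mul_left _ h3)
  rcases Set.eq_empty_or_nonempty SN with hem | hne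
  · rw [hem, csSup_empty]
    exact Nat.zero_le _
  · have hsup : sSup SN ≤ N * sSup SB := csSup_le hne hkey
    have h1B : 1 ≤ sSup SB := by
      obtain ⟨n, Y, hY, -⟩ := hne
      have hpos : 0 < (clusterOf E π (pV Y)).ncard :=
        (Set.ncard_pos (Set.toFinite _)).mpr ⟨pV Y, Set.mem_insert _ _⟩
      exact hpos.trans_le (le_csSup hbddB ⟨pV Y, pV_mem_of_mem_nOrder hY, rfl⟩)
    calc sSup SN - 1 ≤ N * sSup SB - 1 := Nat.sub_le_sub_right hsup 1
      _ = N * (sSup SB - 1 + 1) - 1 := by rw [Nat.sub_add_cancel h1B]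


end Counterfactual
end
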